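/- For every integer j with 1 ≤ j ≤ n: if j is odd, then the constant term of q_j(x) equals 0; and if j is even, then j! times the constant term of q_j(x) equals (−1)^{j/2} · ∏_{k=0}^{j/2−1} (n−2k)(2k+1). -/
import Mathlib


/-- the constant term of `q_j`: it vanishes for odd `j`, and for
even `j`, `j!` times it equals `(-1)^{j/2} ∏_{k=0}^{j/2-1} (n-2k)(2k+1)`. -/
theorem q_constant_term (n : ℕ) (hn : 1 ≤ n) (q : ℕ → Polynomial ℚ)
    (hq0 : q 0 = 1) (hq1 : q 1 = Polynomial.X)
    (hrec : ∀ j : ℕ, 1 ≤ j → j ≤ n - 1 →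
      Polynomial.X * q j =
        Polynomial.C ((j : ℚ) + 1) * q (j + 1) +
        Polynomial.C ((n : ℚ) - (j : ℚ) + 1) * q (j - 1))
    (j : ℕ) (hj1 : 1 ≤ j) (hjn : j ≤ n) :
    (Odd j → (q j).coeff 0 = 0) ∧
    (Even j → (j.factorial : ℚ) * (q j).coeff 0 =
      (-1 : ℚ) ^ (j / 2) *
        ∏ k ∈ Finset.range (j / 2), (((n : ℚ) - 2 * (k : ℚ)) * (2 * (k : ℚ) + 1))) := by
  have key : ∀ k : ℕ, k + 2 ≤ n →
      ((k : ℚ) + 2) * (q (k + 2)).coeff 0 = -(((n : ℚ) - k)) * (q k).coeff 0 := by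
    intro k hk
    have h := hrec (k + 1) (by omega) (by omega)
    have h0 := congrArg (fun p => Polynomial.coeff p 0) h
    simp only [Polynomial.mul_coeff_zero, Polynomial.coeff_X_zero, zero_mul,
      Polynomial.coeff_add, Polynomial.coeff_C_zero, Nat.add_sub_cancel] at h0
    have e : k + 1 + 1 = k + 2 := rfl
    rw [e] at h0
    push_cast at h0
    linear_combination -h0
  have main : ∀ j, j ≤ n →
      (Odd j → (q j).coeff 0 = 0) ∧
      (Even j → (j.factorial : ℚ) * (q j).coeff 0 =
        (-1 : ℚ) ^ (j / 2) *
          ∏ k ∈ Finset.range (j / 2), (((n : ℚ) - 2 * (k : ℚ)) * (2 * (k : ℚ) + 1))) := by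
    intro j
    induction j using Nat.strong_induction_on with
    | _ j ih =>
      intro hjn
      match j with
      | 0 =>
        constructor
        · intro hodd; exact absurd hodd (by decide)
        · intro _; simp [hq0]
      | 1 =>
        constructor
        · intro _; simp [hq1]
        · intro heven; exact absurd heven (by decide)
      | (k + 2) =>
        have IH := ih k (by omega) (by omega)
        have hkey := key k hjn
        constructor
        · intro hodd
          have hok : Odd k := by
            obtain ⟨t, ht⟩ := hodd; exact ⟨t - 1, by omega⟩
          have h0 := IH.1 hok
          have hne : ((k : ℚ) + 2) ≠ 0 := by positivity
          have hz : ((k : ℚ) + 2) * (q (k + 2)).coeff 0 = 0 := by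
            rw [hkey, h0]; ring
          exact (mul_eq_zero.mp hz).resolve_left hne
        · intro heven
          have hek : Even k := by
            obtain ⟨t, ht⟩ := heven; exact ⟨t - 1, by omega⟩
          have h0 := IH.2 hek
          obtain ⟨m, hm⟩ := hek
          subst hm
          have hd1 : (m + m) / 2 = m := by omega
          have hd2 : (m + m + 2) / 2 = m + 1 := by omega
          rw [hd1] at h0
          rw [hd2, Finset.prod_range_succ, pow_succ]
          have hf : ((m + m + 2).factorial : ℚ)
              = ((m : ℚ) + m + 2) * ((m : ℚ) + m + 1) * ((m + m).factorial : ℚ) := by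
            show (((m + m + 1) + 1).factorial : ℚ) = _
            rw [Nat.factorial_succ, Nat.factorial_succ]
            push_cast; ring
          rw [hf]
          push_cast at hkey ⊢
          linear_combination ((m : ℚ) + m + 1) * ((m + m).factorial : ℚ) * hkey
            + (-(((n : ℚ) - (m + m))) * ((m : ℚ) + m + 1)) * h0
  exact main j hjn
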